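/- Let Σ be a compact connected n-dimensional smooth submanifold of ℝ^{n+m} without boundary, f a positive smooth function on Σ with ∫_Σ f dvol = 1, α defined by ∫_Σ f log f dvol − ∫_Σ |∇^Σ f|²/f dvol − ∫_Σ f |H|² dvol = −α, and u a smooth solution of div_Σ(f ∇^Σ u) = f log f − |∇^Σ f|²/f − f |H|² + α f. Then for every x ∈ Σ and every y ∈ T_x^⊥Σ, Δ_Σ u(x) − ⟨H(x), y⟩ ≤ log f(x) − |2H(x)+y|²/4 + (|∇^Σ u(x)|² + |y|²)/4 + α. -/

import Mathlib

open MeasureTheory Real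
open scoped RealInnerProductSpace ENNReal

noncomputable section

variable {N : ℕ}

/-- The tangent space of a set `S ⊆ ℝ^N` at a point `x`, defined as the span of all
velocity vectors at `x` of curves lying in `S` and passing through `x` at time `0`.
For a smooth embedded submanifold this is the usual tangent space. -/
def tangentSpaceAt (S : Set (EuclideanSpace ℝ (Fin N))) (x : EuclideanSpace ℝ (Fin N)) :
    Submodule ℝ (EuclideanSpace ℝ (Fin N)) :=
  Submodule.span ℝ {v | ∃ γ : ℝ → EuclideanSpace ℝ (Fin N),
    (∀ t, γ t ∈ S) ∧ γ 0 = x ∧ HasDerivAt γ v 0}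

/-- The orthogonal projection of the ambient space onto the tangent space of `S` at `x`,
viewed as a continuous linear endomorphism of the ambient space. -/
def tproj (S : Set (EuclideanSpace ℝ (Fin N))) (x : EuclideanSpace ℝ (Fin N)) :
    EuclideanSpace ℝ (Fin N) →L[ℝ] EuclideanSpace ℝ (Fin N) :=
  (tangentSpaceAt S x).subtypeL.comp (Submodule.orthogonalProjection (tangentSpaceAt S x))

/-- The tangential gradient `∇^Σ f` of a function along `S`. -/
def tgrad (S : Set (EuclideanSpace ℝ (Fin N))) (f : EuclideanSpace ℝ (Fin N) → ℝ)
    (x : EuclideanSpace ℝ (Fin N)) : EuclideanSpace ℝ (Fin N) :=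
  tproj S x (gradient f x)

/-- The (vector-valued) second fundamental form `II(x)(v,w)` of `S` at `x`, defined as the
normal component of the derivative along `S`, in the direction `v`, of the tangent vector
field `y ↦ P_y w` (the tangential projection of the constant vector field `w`). -/
def secondFF (S : Set (EuclideanSpace ℝ (Fin N))) (x v w : EuclideanSpace ℝ (Fin N)) :
    EuclideanSpace ℝ (Fin N) :=
  fderivWithin ℝ (fun y => tproj S y w) S x v
    - tproj S x (fderivWithin ℝ (fun y => tproj S y w) S x v)

/-- The mean curvature vector `H(x)` of `S` at `x`: the trace of the second fundamental
form, computed in an orthonormal basis of the tangent space. -/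
def meanCurvature (S : Set (EuclideanSpace ℝ (Fin N))) (x : EuclideanSpace ℝ (Fin N)) :
    EuclideanSpace ℝ (Fin N) :=
  ∑ i, secondFF S x (stdOrthonormalBasis ℝ (tangentSpaceAt S x) i : EuclideanSpace ℝ (Fin N))
    (stdOrthonormalBasis ℝ (tangentSpaceAt S x) i : EuclideanSpace ℝ (Fin N))

/-- The Hessian `D_Σ² u (x)(v,w)` of `u` on `S`: the pairing of `w` with the derivative
along `S` in the direction `v` of the tangential gradient of `u`. -/
def hessS (S : Set (EuclideanSpace ℝ (Fin N))) (u : EuclideanSpace ℝ (Fin N) → ℝ)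
    (x v w : EuclideanSpace ℝ (Fin N)) : ℝ :=
  ⟪fderivWithin ℝ (tgrad S u) S x v, w⟫

/-- The tangential divergence `div_Σ X` of a vector field `X` along `S`. -/
def sdiv (S : Set (EuclideanSpace ℝ (Fin N))) (X : EuclideanSpace ℝ (Fin N) → EuclideanSpace ℝ (Fin N))
    (x : EuclideanSpace ℝ (Fin N)) : ℝ :=
  ∑ i, ⟪fderivWithin ℝ X S x (stdOrthonormalBasis ℝ (tangentSpaceAt S x) i : EuclideanSpace ℝ (Fin N)),
        (stdOrthonormalBasis ℝ (tangentSpaceAt S x) i : EuclideanSpace ℝ (Fin N))⟫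

/-- `S` is an `n`-dimensional smooth (C^∞) submanifold, without boundary, of
`ℝ^(n+m)`: near each of its points it is the zero set of a smooth submersion into `ℝ^m`. -/
def IsSubmanifold (n m : ℕ) (S : Set (EuclideanSpace ℝ (Fin (n + m)))) : Prop :=
  ∀ x ∈ S, ∃ U : Set (EuclideanSpace ℝ (Fin (n + m))), IsOpen U ∧ x ∈ U ∧
    ∃ g : EuclideanSpace ℝ (Fin (n + m)) → EuclideanSpace ℝ (Fin m),
      ContDiffOn ℝ (⊤ : ℕ∞) g U ∧
      (∀ y ∈ U, Function.Surjective (fderiv ℝ g y)) ∧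
      S ∩ U = {y ∈ U | g y = 0}

/-- The Gaussian weight `(4π)^(-n/2) e^(-|x|²/4)`. -/
def gaussW (n : ℕ) (x : EuclideanSpace ℝ (Fin N)) : ℝ :=
  (4 * π) ^ (-(n : ℝ) / 2) * Real.exp (-‖x‖ ^ 2 / 4)

end

/-! At `x ∈ Σ` the product rule turns the equation for `u` into
`f Δ_Σ u + ⟨∇^Σ f, ∇^Σ u⟩ = f log f - |∇^Σ f|²/f - f |H|² + α f`, and `|2 ∇^Σ f + f ∇^Σ u|² ≥ 0`
then bounds `Δ_Σ u` by `log f - |H|² + |∇^Σ u|²/4 + α`. Expanding `|2H + y|²` shows that this is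
the claimed inequality: the terms `⟨H, y⟩` and `|y|²` cancel.
The product rule is needed only in tangent directions, where `fderivWithin` agrees with every
derivative within `Σ` because the tangent space is spanned by the tangent cone. -/

section TangentSpace

variable {E : Type*} [NormedAddCommGroup E] [NormedSpace ℝ E]

theorem mem_tangentConeAt_of_hasDerivAt {S : Set E} {x v : E} {γ : ℝ → E}
    (hγS : ∀ t, γ t ∈ S) (hγ0 : γ 0 = x) (hγ : HasDerivAt γ v 0) :
    v ∈ tangentConeAt ℝ S x := by
  have hv := hγ.hasFDerivAt.hasFDerivWithinAt.mapsTo_tangent_cone (s := Set.univ)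
    (by simp : (1 : ℝ) ∈ tangentConeAt ℝ Set.univ 0)
  simp only [ContinuousLinearMap.toSpanSingleton_apply, one_smul, Set.image_univ, hγ0] at hv
  exact tangentConeAt_mono (Set.range_subset_iff.2 hγS) hv

variable {N : ℕ} {S : Set (EuclideanSpace ℝ (Fin N))} {x : EuclideanSpace ℝ (Fin N)}

theorem tangentSpaceAt_le_span_tangentConeAt :
    tangentSpaceAt S x ≤ Submodule.span ℝ (tangentConeAt ℝ S x) :=
  Submodule.span_mono fun _ ⟨_, hγS, hγ0, hγ⟩ => mem_tangentConeAt_of_hasDerivAt hγS hγ0 hγ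

theorem HasFDerivWithinAt.fderivWithin_apply_of_mem_tangentSpaceAt
    {g : EuclideanSpace ℝ (Fin N) → E} {g' : EuclideanSpace ℝ (Fin N) →L[ℝ] E}
    (hg : HasFDerivWithinAt g g' S x) {v : EuclideanSpace ℝ (Fin N)}
    (hv : v ∈ tangentSpaceAt S x) : fderivWithin ℝ g S x v = g' v :=
  LinearMap.eqOn_span (f := (fderivWithin ℝ g S x : _ →ₗ[ℝ] E)) (g := (g' : _ →ₗ[ℝ] E))
    (hg.differentiableWithinAt.hasFDerivWithinAt.unique_on hg)
    (tangentSpaceAt_le_span_tangentConeAt hv)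

end TangentSpace

theorem OrthonormalBasis.sum_inner_mul_inner_eq_inner_starProjection
    {E ι : Type*} [NormedAddCommGroup E] [InnerProductSpace ℝ E] [Fintype ι]
    {K : Submodule ℝ E} [K.HasOrthogonalProjection] (b : OrthonormalBasis ι ℝ K) (a w : E) :
    ∑ i, ⟪a, b i⟫ * ⟪w, b i⟫ = ⟪K.starProjection a, w⟫ := by
  simp [b.starProjection_eq_sum_rankOne, sum_inner, real_inner_smul_right, real_inner_comm]

theorem DifferentiableWithinAt.of_smul_of_ne_zero {E F : Type*} [NormedAddCommGroup E]
    [NormedSpace ℝ E] [NormedAddCommGroup F] [NormedSpace ℝ F] {f : E → ℝ} {X : E → F}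
    {S : Set E} {x : E} (hf : DifferentiableAt ℝ f x) (hfx : f x ≠ 0)
    (h : DifferentiableWithinAt ℝ (fun z => f z • X z) S x) :
    DifferentiableWithinAt ℝ X S x := by
  refine ((hf.differentiableWithinAt.inv hfx).smul h).congr_of_eventuallyEq ?_
    (by simp [smul_smul, inv_mul_cancel₀ hfx])
  filter_upwards [nhdsWithin_le_nhds (hf.continuousAt.eventually_ne hfx)] with z hz
  simp [smul_smul, inv_mul_cancel₀ hz]

-- `|2a + c b|² ≥ 0`, divided by `4c²`.
theorem le_add_norm_sq_div_four_of_mul_add_inner_eq {E : Type*} [NormedAddCommGroup E]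
    [InnerProductSpace ℝ E] {a b : E} {c D L : ℝ} (hc : 0 < c)
    (h : c * D + ⟪a, b⟫ = c * L - ‖a‖ ^ 2 / c) : D ≤ L + ‖b‖ ^ 2 / 4 := by
  have hsq : 0 ≤ 4 * ‖a‖ ^ 2 + 4 * c * ⟪a, b⟫ + c ^ 2 * ‖b‖ ^ 2 := by
    have := sq_nonneg ‖(2 : ℝ) • a + c • b‖
    rw [norm_add_sq_real, norm_smul, norm_smul, real_inner_smul_left, real_inner_smul_right,
      Real.norm_ofNat, Real.norm_of_nonneg hc.le] at this
    linarith
  have hc2 : c ^ 2 * D + c * ⟪a, b⟫ = c ^ 2 * L - ‖a‖ ^ 2 := by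
    field_simp at h
    linarith
  have hprod : c ^ 2 * (D - (L + ‖b‖ ^ 2 / 4)) ≤ 0 := by linarith
  exact sub_nonpos.1 (nonpos_of_mul_nonpos_right hprod (by positivity))

section Divergence

variable {N : ℕ} {S : Set (EuclideanSpace ℝ (Fin N))} {x : EuclideanSpace ℝ (Fin N)}
  {f u : EuclideanSpace ℝ (Fin N) → ℝ} {X : EuclideanSpace ℝ (Fin N) → EuclideanSpace ℝ (Fin N)}

theorem tproj_eq_starProjection : tproj S x = (tangentSpaceAt S x).starProjection := rfl

theorem sdiv_of_not_differentiableWithinAt (hX : ¬ DifferentiableWithinAt ℝ X S x) :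
    sdiv S X x = 0 := by
  simp [sdiv, fderivWithin_zero_of_not_differentiableWithinAt hX]

theorem sdiv_fun_smul (hf : DifferentiableAt ℝ f x) (hX : DifferentiableWithinAt ℝ X S x) :
    sdiv S (fun z => f z • X z) x = f x * sdiv S X x + ⟪tgrad S f x, X x⟫ := by
  have hfX : HasFDerivWithinAt (fun z => f z • X z)
      (f x • fderivWithin ℝ X S x + (fderiv ℝ f x).smulRight (X x)) S x :=
    hf.hasFDerivAt.hasFDerivWithinAt.smul hX.hasFDerivWithinAt
  have hgrad (v : EuclideanSpace ℝ (Fin N)) : fderiv ℝ f x v = ⟪gradient f x, v⟫ := by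
    simp [gradient]
  simp only [sdiv, hfX.fderivWithin_apply_of_mem_tangentSpaceAt (Submodule.coe_mem _),
    add_apply, smul_apply, ContinuousLinearMap.smulRight_apply, inner_add_left,
    real_inner_smul_left, hgrad, Finset.sum_add_distrib, ← Finset.mul_sum]
  rw [OrthonormalBasis.sum_inner_mul_inner_eq_inner_starProjection, tgrad, tproj_eq_starProjection]

theorem sdiv_tgrad_le_of_sdiv_smul_tgrad_eq (hf : DifferentiableAt ℝ f x) (hfx : 0 < f x)
    {L : ℝ} (h : sdiv S (fun z => f z • tgrad S u z) x = f x * L - ‖tgrad S f x‖ ^ 2 / f x) :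
    sdiv S (tgrad S u) x ≤ L + ‖tgrad S u x‖ ^ 2 / 4 := by
  by_cases hu : DifferentiableWithinAt ℝ (tgrad S u) S x
  · rw [sdiv_fun_smul hf hu] at h
    exact le_add_norm_sq_div_four_of_mul_add_inner_eq hfx h
  · -- Both `fderivWithin`s are junk `0`, and the equation alone forces `L ≥ 0`.
    have hfu := mt (DifferentiableWithinAt.of_smul_of_ne_zero hf hfx.ne') hu
    rw [sdiv_of_not_differentiableWithinAt hfu] at h
    have hL : 0 ≤ f x * L := by linarith [div_nonneg (sq_nonneg ‖tgrad S f x‖) hfx.le]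
    rw [sdiv_of_not_differentiableWithinAt hu]
    exact add_nonneg (nonneg_of_mul_nonneg_right hL hfx) (by positivity)

end Divergence

theorem pointwise_trace_inequality_general (n m : ℕ)
    (S : Set (EuclideanSpace ℝ (Fin (n + m))))
    (f : EuclideanSpace ℝ (Fin (n + m)) → ℝ)
    (hf : ContDiff ℝ (⊤ : ℕ∞) f) (hpos : ∀ x ∈ S, 0 < f x)
    (α : ℝ)
    (u : EuclideanSpace ℝ (Fin (n + m)) → ℝ)
    (hPDE : ∀ x ∈ S, sdiv S (fun z => f z • tgrad S u z) x
        = f x * Real.log (f x) - ‖tgrad S f x‖ ^ 2 / f x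
          - f x * ‖meanCurvature S x‖ ^ 2 + α * f x) :
    ∀ x ∈ S, ∀ y ∈ (tangentSpaceAt S x)ᗮ,
      sdiv S (tgrad S u) x - ⟪meanCurvature S x, y⟫
        ≤ Real.log (f x) - ‖(2 : ℝ) • meanCurvature S x + y‖ ^ 2 / 4
          + (‖tgrad S u x‖ ^ 2 + ‖y‖ ^ 2) / 4 + α := by
  intro x hx y _
  have hdiv := sdiv_tgrad_le_of_sdiv_smul_tgrad_eq
    (L := Real.log (f x) - ‖meanCurvature S x‖ ^ 2 + α) (hf.differentiable (by simp) x)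
    (hpos x hx) (by rw [hPDE x hx]; ring)
  have hexp : ‖(2 : ℝ) • meanCurvature S x + y‖ ^ 2
      = 4 * ‖meanCurvature S x‖ ^ 2 + 4 * ⟪meanCurvature S x, y⟫ + ‖y‖ ^ 2 := by
    rw [norm_add_sq_real, real_inner_smul_left, norm_smul, Real.norm_ofNat]
    ring
  linarith

/-- **Pointwise trace inequality (from the proof of Lemma 4).**
Let `Σ` be a compact connected `n`-dimensional smooth submanifold of `ℝ^(n+m)` without
boundary, `f` a positive smooth function on `Σ` with `∫_Σ f dvol = 1`, `α` defined by
`∫_Σ f log f − ∫_Σ |∇^Σ f|²/f − ∫_Σ f |H|² = −α`, and `u` a smooth solution of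
`div_Σ(f ∇^Σ u) = f log f − |∇^Σ f|²/f − f |H|² + α f` on `Σ`.  Then for every `x ∈ Σ`
and every normal vector `y ∈ T_x^⊥Σ`,
`Δ_Σ u(x) − ⟨H(x), y⟩ ≤ log f(x) − |2H(x)+y|²/4 + (|∇^Σ u(x)|² + |y|²)/4 + α`. -/
theorem pointwise_trace_inequality (n m : ℕ)
    (S : Set (EuclideanSpace ℝ (Fin (n + m))))
    (hS : IsSubmanifold n m S) (hcpt : IsCompact S) (hconn : IsConnected S)
    (f : EuclideanSpace ℝ (Fin (n + m)) → ℝ)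
    (hf : ContDiff ℝ (⊤ : ℕ∞) f) (hpos : ∀ x ∈ S, 0 < f x)
    (hnorm : ∫ x in S, f x ∂μH[(n : ℝ)] = 1)
    (α : ℝ)
    (hα : ∫ x in S, f x * Real.log (f x) ∂μH[(n : ℝ)]
        - ∫ x in S, ‖tgrad S f x‖ ^ 2 / f x ∂μH[(n : ℝ)]
        - ∫ x in S, f x * ‖meanCurvature S x‖ ^ 2 ∂μH[(n : ℝ)] = -α)
    (u : EuclideanSpace ℝ (Fin (n + m)) → ℝ) (hu : ContDiff ℝ (⊤ : ℕ∞) u)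
    (hPDE : ∀ x ∈ S, sdiv S (fun z => f z • tgrad S u z) x
        = f x * Real.log (f x) - ‖tgrad S f x‖ ^ 2 / f x
          - f x * ‖meanCurvature S x‖ ^ 2 + α * f x) :
    ∀ x ∈ S, ∀ y ∈ (tangentSpaceAt S x)ᗮ,
      sdiv S (tgrad S u) x - ⟪meanCurvature S x, y⟫
        ≤ Real.log (f x) - ‖(2 : ℝ) • meanCurvature S x + y‖ ^ 2 / 4
          + (‖tgrad S u x‖ ^ 2 + ‖y‖ ^ 2) / 4 + α :=
  pointwise_trace_inequality_general n m S f hf hpos α u hPDE
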